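/- For every positive integer n, the cosine Fourier coefficient of log Γ on (0,1) equals 1/(2n); that is, 2·∫_0^1 log Γ(x) · cos(2π n x) dx = 1/(2n). -/

import Mathlib

/-!
By Euler's reflection formula `log Γ(x) + log Γ(1 - x) = log π - log sin(πx)` on `(0, 1)`, and
`cos(2πnx)` is invariant under `x ↦ 1 - x`, so twice the coefficient is
`∫₀¹ (log π - log sin πx) cos(2πnx) dx`. Integrating by parts gives
`∫₀¹ cot(πx) sin(2πnx) / (2n) dx`, and `cot θ sin 2nθ = 1 + cos 2nθ + 2 ∑_{0<k<n} cos 2kθ`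
integrates to `1 / (2n)`. The boundary terms vanish because `|sin 2nθ| ≤ 2n |sin θ|` and
`t log t → 0`.
-/

open Real Set Filter Finset Topology MeasureTheory

lemma abs_sin_nat_mul_le (n : ℕ) (x : ℝ) : |sin (n * x)| ≤ n * |sin x| := by
  induction n with
  | zero => simp
  | succ n ih =>
    rw [Nat.cast_succ, add_mul, one_mul, sin_add]
    calc |sin (n * x) * cos x + cos (n * x) * sin x|
        ≤ |sin (n * x)| * |cos x| + |cos (n * x)| * |sin x| := by
          simpa only [abs_mul] using
            abs_add_le (sin (n * x) * cos x) (cos (n * x) * sin x)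
      _ ≤ |sin (n * x)| * 1 + 1 * |sin x| := by
          gcongr
          exacts [abs_cos_le_one _, abs_cos_le_one _]
      _ ≤ (n + 1) * |sin x| := by linarith

-- At a zero of `f` the junk value `log 0 = 0` agrees with the limit, since `f log f → 0`.
lemma continuous_log_mul_of_abs_le {X : Type*} [TopologicalSpace X] {f g : X → ℝ}
    (hf : Continuous f) (hg : Continuous g) {C : ℝ} (hfg : ∀ x, |g x| ≤ C * |f x|) :
    Continuous fun x ↦ log (f x) * g x := by
  refine continuous_iff_continuousAt.2 fun x ↦ ?_
  by_cases hx : f x = 0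
  · have hgx : g x = 0 := abs_nonpos_iff.1 (by simpa [hx] using hfg x)
    have hbound : Tendsto (fun y ↦ C * |f y * log (f y)|) (𝓝 x) (𝓝 0) := by
      simpa [hx] using ((continuous_mul_log.comp hf).abs.const_mul C).tendsto x
    rw [ContinuousAt, hgx, mul_zero]
    refine squeeze_zero_norm (fun y ↦ ?_) hbound
    calc ‖log (f y) * g y‖ = |log (f y)| * |g y| := by rw [norm_mul, norm_eq_abs, norm_eq_abs]
      _ ≤ |log (f y)| * (C * |f y|) := mul_le_mul_of_nonneg_left (hfg y) (abs_nonneg _)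
      _ = C * |f y * log (f y)| := by rw [abs_mul]; ring
  · exact (hf.continuousAt.log hx).mul hg.continuousAt

lemma sin_pi_mul_pos_of_mem_Ioo {x : ℝ} (hx : x ∈ Ioo (0:ℝ) 1) : 0 < sin (π * x) :=
  sin_pos_of_pos_of_lt_pi (mul_pos pi_pos hx.1) (by nlinarith [pi_pos, hx.2])

lemma intervalIntegrable_log_Gamma {a b : ℝ} (ha : 0 ≤ a) (hb : 0 ≤ b) :
    IntervalIntegrable (fun x ↦ log (Gamma x)) volume a b := by
  have hcont : ContinuousOn (fun x ↦ log (Gamma (x + 1))) (uIcc a b) :=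
    (convexOn_log_Gamma.continuousOn isOpen_Ioi).comp (continuousOn_id.add continuousOn_const)
      fun x hx ↦ show 0 < x + 1 by linarith [le_min ha hb, hx.1]
  refine (hcont.intervalIntegrable.sub intervalIntegral.intervalIntegrable_log').congr
    fun x hx ↦ ?_
  have hx0 : 0 < x := (le_min ha hb).trans_lt hx.1
  simp only [Gamma_add_one hx0.ne', log_mul hx0.ne' (Gamma_pos_of_pos hx0).ne', add_sub_cancel_left]

lemma log_Gamma_add_log_Gamma_one_sub {x : ℝ} (hx : sin (π * x) ≠ 0) :
    log (Gamma x) + log (Gamma (1 - x)) = log π - log (sin (π * x)) := by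
  have hne : Gamma x * Gamma (1 - x) ≠ 0 := by
    rw [Gamma_mul_Gamma_one_sub]
    exact div_ne_zero pi_ne_zero hx
  rw [← log_mul (left_ne_zero_of_mul hne) (right_ne_zero_of_mul hne), Gamma_mul_Gamma_one_sub,
    log_div pi_ne_zero hx]

lemma two_mul_integral_mul_eq_integral_add_comp_sub {f g : ℝ → ℝ} {a b : ℝ}
    (hfg : IntervalIntegrable (fun x ↦ f x * g x) volume a b) (hg : ∀ x, g (a + b - x) = g x) :
    2 * ∫ x in a..b, f x * g x = ∫ x in a..b, (f x + f (a + b - x)) * g x := by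
  have hint : IntervalIntegrable (fun x ↦ f (a + b - x) * g x) volume a b := by
    simpa [hg] using (hfg.comp_sub_left (a + b)).symm
  have hrefl : ∫ x in a..b, f (a + b - x) * g x = ∫ x in a..b, f x * g x := by
    simpa [hg] using
      intervalIntegral.integral_comp_sub_left (a := a) (b := b) (fun x ↦ f x * g x) (a + b)
  rw [two_mul]
  nth_rw 2 [← hrefl]
  rw [← intervalIntegral.integral_add hfg hint]
  simp only [add_mul]

lemma sin_mul_one_add_cos_add_two_mul_sum_cos (θ : ℝ) {n : ℕ} (hn : 1 ≤ n) :
    sin θ * (1 + cos (2 * n * θ) + 2 * ∑ k ∈ Ico 1 n, cos (2 * k * θ))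
      = cos θ * sin (2 * n * θ) := by
  induction n, hn using Nat.le_induction with
  | base =>
    simp only [Nat.cast_one, Ico_self, sum_empty, mul_zero, add_zero, mul_one, sin_two_mul,
      cos_two_mul]
    ring
  | succ n hn ih =>
    rw [sum_Ico_succ_top hn, Nat.cast_succ,
      show 2 * (n + 1 : ℝ) * θ = 2 * n * θ + 2 * θ by ring, cos_add, sin_add, sin_two_mul,
      cos_two_mul]
    linear_combination ih - 2 * sin (2 * n * θ) * cos θ * sin_sq_add_cos_sq θ

lemma hasDerivAt_sin_const_mul_div (c x : ℝ) (hc : c ≠ 0) :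
    HasDerivAt (fun y ↦ sin (c * y) / c) (cos (c * x)) x := by
  have := ((hasDerivAt_id x).const_mul c).sin.div_const c
  simpa [hc] using this

-- A primitive of `cot (π x) sin (2π n x) / (2n)`, by `sin_mul_one_add_cos_add_two_mul_sum_cos`.
noncomputable def cotSinPrimitive (n : ℕ) (x : ℝ) : ℝ :=
  (x + sin (2 * π * n * x) / (2 * π * n) + ∑ k ∈ Ico 1 n, sin (2 * π * k * x) / (π * k)) /
    (2 * n)

lemma hasDerivAt_cotSinPrimitive {n : ℕ} (hn : n ≠ 0) (x : ℝ) :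
    HasDerivAt (cotSinPrimitive n)
      ((1 + cos (2 * π * n * x) + 2 * ∑ k ∈ Ico 1 n, cos (2 * π * k * x)) / (2 * n)) x := by
  have hsum : HasDerivAt (fun y ↦ ∑ k ∈ Ico 1 n, sin (2 * π * k * y) / (π * k))
      (∑ k ∈ Ico 1 n, 2 * cos (2 * π * k * x)) x := by
    refine HasDerivAt.fun_sum fun k hk ↦ ?_
    have hk : (k : ℝ) ≠ 0 := by
      have := (mem_Ico.1 hk).1; positivity
    have h := (hasDerivAt_sin_const_mul_div (2 * π * k) x (by positivity)).const_mul 2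
    refine h.congr_of_eventuallyEq (Eventually.of_forall fun y ↦ ?_)
    field_simp
  have hn' : (2 * π * n) ≠ 0 := by positivity
  have := (((hasDerivAt_id x).add (hasDerivAt_sin_const_mul_div _ x hn')).add hsum).div_const
    (2 * n)
  rw [mul_sum]
  exact this

lemma continuous_cotSinPrimitive (n : ℕ) : Continuous (cotSinPrimitive n) := by
  unfold cotSinPrimitive
  fun_prop

-- Integration by parts against `sin (2π n x) / (2π n)` turns the `log sin` factor into `cot`.
noncomputable def logSinCosPrimitive (n : ℕ) (x : ℝ) : ℝ :=
  (log π - log (sin (π * x))) * sin (2 * π * n * x) / (2 * π * n) + cotSinPrimitive n x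

lemma continuous_logSinCosPrimitive (n : ℕ) : Continuous (logSinCosPrimitive n) := by
  have hlog : Continuous fun x ↦ log (sin (π * x)) * sin (2 * π * n * x) := by
    refine continuous_log_mul_of_abs_le (by fun_prop) (by fun_prop) (C := 2 * n) fun x ↦ ?_
    have := abs_sin_nat_mul_le (2 * n) (π * x)
    push_cast at this
    rwa [show 2 * n * (π * x) = 2 * π * n * x by ring] at this
  unfold logSinCosPrimitive
  simp_rw [sub_mul]
  exact (((continuous_const.mul (by fun_prop)).sub hlog).div_const _).add
    (continuous_cotSinPrimitive n)

lemma hasDerivAt_logSinCosPrimitive {n : ℕ} (hn : 1 ≤ n) {x : ℝ} (hx : sin (π * x) ≠ 0) :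
    HasDerivAt (logSinCosPrimitive n) ((log π - log (sin (π * x))) * cos (2 * π * n * x)) x := by
  have hn0 : (n : ℝ) ≠ 0 := by positivity
  have hlogsin : HasDerivAt (fun y ↦ log π - log (sin (π * y)))
      (-(π * cos (π * x) / sin (π * x))) x := by
    have := (((hasDerivAt_id x).const_mul π).sin.log hx).const_sub (log π)
    simpa [mul_comm] using this
  have hsin : HasDerivAt (fun y ↦ sin (2 * π * n * y))
      (2 * π * n * cos (2 * π * n * x)) x := by
    simpa [mul_comm] using ((hasDerivAt_id x).const_mul (2 * π * n)).sin
  refine ((hlogsin.mul hsin).div_const (2 * π * n)).add (hasDerivAt_cotSinPrimitive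
    (by omega) x) |>.congr_deriv ?_
  have key := sin_mul_one_add_cos_add_two_mul_sum_cos (π * x) hn
  field_simp
  ring_nf at key ⊢
  linear_combination key

lemma intervalIntegrable_log_sin_pi_mul (a b : ℝ) :
    IntervalIntegrable (fun x ↦ log (sin (π * x))) volume a b := by
  have := (intervalIntegrable_log_sin (a := π * a) (b := π * b)).comp_mul_left (c := π)
  simpa [pi_ne_zero] using this

lemma integral_log_pi_sub_log_sin_mul_cos {n : ℕ} (hn : 1 ≤ n) :
    ∫ x in (0:ℝ)..1, (log π - log (sin (π * x))) * cos (2 * π * n * x) = 1 / (2 * n) := by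
  have hint : IntervalIntegrable (fun x ↦ (log π - log (sin (π * x))) * cos (2 * π * n * x))
      volume 0 1 :=
    (intervalIntegrable_const.sub (intervalIntegrable_log_sin_pi_mul 0 1)).mul_continuousOn
      (by fun_prop)
  have hderiv : ∀ x ∈ Ioo (0:ℝ) 1, HasDerivAt (logSinCosPrimitive n)
      ((log π - log (sin (π * x))) * cos (2 * π * n * x)) x := fun x hx ↦
    hasDerivAt_logSinCosPrimitive hn (sin_pi_mul_pos_of_mem_Ioo hx).ne'
  rw [intervalIntegral.integral_eq_sub_of_hasDerivAt_of_le zero_le_one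
    (continuous_logSinCosPrimitive n).continuousOn hderiv hint]
  have hsin : ∀ k : ℕ, sin (2 * π * k) = 0 := fun k ↦ by
    rw [show 2 * π * k = (2 * k : ℕ) * π by push_cast; ring, sin_nat_mul_pi]
  simp [logSinCosPrimitive, cotSinPrimitive, hsin]

/-- The cosine Fourier coefficients of `log Γ` on `(0,1)`:
`2·∫_0^1 log Γ(x)·cos(2πnx) dx = 1/(2n)` for every positive integer `n`. -/
theorem logGamma_cos_fourier_coeff (n : ℕ) (hn : 0 < n) :
    2 * ∫ x in (0:ℝ)..1, Real.log (Real.Gamma x) * Real.cos (2 * π * n * x)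
      = 1 / (2 * n) := by
  have hint : IntervalIntegrable (fun x ↦ log (Gamma x) * cos (2 * π * n * x)) volume 0 1 :=
    (intervalIntegrable_log_Gamma le_rfl zero_le_one).mul_continuousOn (by fun_prop)
  have hcos (x : ℝ) : cos (2 * π * n * (0 + 1 - x)) = cos (2 * π * n * x) := by
    rw [show 2 * π * n * (0 + 1 - x) = n * (2 * π) - 2 * π * n * x by ring,
      cos_nat_mul_two_pi_sub]
  rw [two_mul_integral_mul_eq_integral_add_comp_sub hint hcos,
    ← integral_log_pi_sub_log_sin_mul_cos hn]
  refine intervalIntegral.integral_congr_uIoo fun x hx ↦ ?_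
  rw [uIoo_of_le zero_le_one] at hx
  simp only [zero_add, log_Gamma_add_log_Gamma_one_sub (sin_pi_mul_pos_of_mem_Ioo hx).ne']
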